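/- Let f : ℝⁿ → ℝ have L-Lipschitz gradient and be bounded below by f*. Consider the deterministic SAM iteration x_{t+1} = x_t − η∇f(x_t + ε_t) with arbitrary ε_t satisfying ‖ε_t‖ = ρ for all t, where η ≤ 2/(3L). Then (1 − 3Lη/2)·(1/T)∑_{t=0}^{T−1}‖∇f(x_t)‖² ≤ (f(x_0) − f*)/(ηT) + Lρ²/(2η) + L³ηρ². -/

import Mathlib

/-!
A single SAM step is a gradient step evaluated at the perturbed point `x + ε`. The descent lemma
for an `L`-smooth `f` bounds the decrease of `f` along it by the inner product
`⟪∇f x, ∇f (x + ε)⟫` and by `‖∇f (x + ε)‖²`; since `‖∇f (x + ε) - ∇f x‖ ≤ L ρ`, both are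
controlled by `‖∇f x‖` up to errors in `L ρ`, and completing two squares leaves a per-step bound
`η (1 - 3Lη/2) ‖∇f x_t‖² ≤ f x_t - f x_{t+1} + Lρ²/2 + L³η²ρ²`. Summing telescopes and
`f ≥ f*` finishes.
-/

open InnerProductSpace

theorem Finset.sum_range_le_sub_add_mul {a u : ℕ → ℝ} {c : ℝ}
    (h : ∀ t, a t ≤ u t - u (t + 1) + c) (T : ℕ) :
    ∑ t ∈ Finset.range T, a t ≤ u 0 - u T + T * c := by
  calc ∑ t ∈ Finset.range T, a t
      ≤ ∑ t ∈ Finset.range T, (u t - u (t + 1) + c) := Finset.sum_le_sum fun t _ => h t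
    _ = u 0 - u T + T * c := by
      rw [Finset.sum_add_distrib, Finset.sum_range_sub', Finset.sum_const, Finset.card_range,
        nsmul_eq_mul]

section LipschitzGradient

variable {E : Type*} [NormedAddCommGroup E] [InnerProductSpace ℝ E] [CompleteSpace E]
  {f : E → ℝ} {L : ℝ}

theorem DifferentiableAt.hasDerivAt_comp_add_smul {x v : E} {t : ℝ}
    (hf : DifferentiableAt ℝ f (x + t • v)) :
    HasDerivAt (fun s : ℝ => f (x + s • v)) ⟪gradient f (x + t • v), v⟫_ℝ t := by
  have hline : HasDerivAt (fun s : ℝ => x + s • v) v t := by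
    simpa using ((hasDerivAt_id t).smul_const v).const_add x
  simpa [toDual_apply_apply, Function.comp_def] using
    hf.hasGradientAt.hasFDerivAt.comp_hasDerivAt t hline

theorem inner_gradient_add_smul_sub_le
    (hlip : ∀ a b, ‖gradient f a - gradient f b‖ ≤ L * ‖a - b‖) (x v : E) {t : ℝ} (ht : 0 ≤ t) :
    ⟪gradient f (x + t • v) - gradient f x, v⟫_ℝ ≤ L * t * ‖v‖ ^ 2 := by
  calc ⟪gradient f (x + t • v) - gradient f x, v⟫_ℝ
      ≤ ‖gradient f (x + t • v) - gradient f x‖ * ‖v‖ := real_inner_le_norm _ _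
    _ ≤ L * ‖x + t • v - x‖ * ‖v‖ := by gcongr; exact hlip _ _
    _ = L * t * ‖v‖ ^ 2 := by
      rw [add_sub_cancel_left, norm_smul, Real.norm_of_nonneg ht]; ring

theorem apply_add_le_of_lipschitz_gradient (hf : Differentiable ℝ f)
    (hlip : ∀ a b, ‖gradient f a - gradient f b‖ ≤ L * ‖a - b‖) (x v : E) :
    f (x + v) ≤ f x + ⟪gradient f x, v⟫_ℝ + L / 2 * ‖v‖ ^ 2 := by
  set c := ⟪gradient f x, v⟫_ℝ
  -- `φ' t = ⟪∇f (x + t • v) - ∇f x, v⟫ - L t ‖v‖² ≤ 0` for `t ≥ 0`, and `φ 1 ≤ φ 0` is the claim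
  set φ : ℝ → ℝ := fun t => f (x + t • v) - t * c - t ^ 2 * (L / 2 * ‖v‖ ^ 2)
  have hφ' : ∀ t, HasDerivAt φ
      (⟪gradient f (x + t • v), v⟫_ℝ - c - 2 * t * (L / 2 * ‖v‖ ^ 2)) t := fun t => by
    have h := ((hf (x + t • v)).hasDerivAt_comp_add_smul.sub (hasDerivAt_mul_const c)).sub
      ((hasDerivAt_pow 2 t).mul_const (L / 2 * ‖v‖ ^ 2))
    simp only [Nat.cast_ofNat, Nat.reduceSub, pow_one] at h
    exact h
  have hanti : AntitoneOn φ (Set.Ici 0) := by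
    refine antitoneOn_of_hasDerivWithinAt_nonpos (convex_Ici 0)
      (fun t _ => (hφ' t).continuousAt.continuousWithinAt) (fun t _ => (hφ' t).hasDerivWithinAt)
      fun t ht => ?_
    rw [interior_Ici] at ht
    have := inner_gradient_add_smul_sub_le hlip x v ht.le
    rw [inner_sub_left] at this
    linarith
  have := hanti Set.self_mem_Ici (Set.mem_Ici.2 zero_le_one) zero_le_one
  simp only [φ, one_smul, zero_smul, add_zero, one_pow, one_mul, zero_mul, sub_zero,
    zero_pow two_ne_zero] at this
  linarith

theorem sam_step_le (hf : Differentiable ℝ f)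
    (hlip : ∀ a b, ‖gradient f a - gradient f b‖ ≤ L * ‖a - b‖) (hL : 0 ≤ L) {η : ℝ}
    (hη : 0 ≤ η) (x ε : E) :
    η * (1 - 3 * L * η / 2) * ‖gradient f x‖ ^ 2 ≤
      f x - f (x - η • gradient f (x + ε)) + L * ‖ε‖ ^ 2 / 2 + L ^ 3 * η ^ 2 * ‖ε‖ ^ 2 := by
  set a := gradient f x
  set b := gradient f (x + ε)
  have hdescent : f (x - η • b) ≤ f x - η * ⟪a, b⟫_ℝ + L / 2 * η ^ 2 * ‖b‖ ^ 2 := by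
    have := apply_add_le_of_lipschitz_gradient hf hlip x (-(η • b))
    rwa [← sub_eq_add_neg, inner_neg_right, real_inner_smul_right, norm_neg, norm_smul,
      Real.norm_of_nonneg hη, mul_pow, ← mul_assoc, ← sub_eq_add_neg] at this
  have hba : ‖b - a‖ ≤ L * ‖ε‖ := by simpa using hlip (x + ε) x
  have hinner : ‖a‖ ^ 2 - ‖a‖ * (L * ‖ε‖) ≤ ⟪a, b⟫_ℝ := by
    have hcs : -(‖a‖ * ‖b - a‖) ≤ ⟪a, b - a⟫_ℝ := neg_le_of_abs_le (abs_real_inner_le_norm a _)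
    rw [inner_sub_right, real_inner_self_eq_norm_sq] at hcs
    nlinarith [norm_nonneg a]
  have hnb : ‖b‖ ≤ ‖a‖ + L * ‖ε‖ := by
    linarith [norm_sub_norm_le b a]
  have hη_inner := mul_le_mul_of_nonneg_left hinner hη
  have hnb_sq : L / 2 * η ^ 2 * ‖b‖ ^ 2 ≤ L / 2 * η ^ 2 * (‖a‖ + L * ‖ε‖) ^ 2 := by
    gcongr
  -- the remainder is `L/2 (η‖a‖ - ‖ε‖)² + Lη²/2 (‖a‖ - L‖ε‖)²`
  have hsq₁ : 0 ≤ L / 2 * (η * ‖a‖ - ‖ε‖) ^ 2 := by positivity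
  have hsq₂ : 0 ≤ L * η ^ 2 / 2 * (‖a‖ - L * ‖ε‖) ^ 2 := by positivity
  nlinarith

end LipschitzGradient

theorem stmt12_general {n : ℕ} (f : EuclideanSpace ℝ (Fin n) → ℝ) (L η ρ fstar : ℝ)
    (hL : 0 < L) (hη : 0 < η)
    (hdiff : Differentiable ℝ f)
    (hlip : ∀ x y, ‖gradient f x - gradient f y‖ ≤ L * ‖x - y‖)
    (hlb : ∀ x, fstar ≤ f x)
    (x ε : ℕ → EuclideanSpace ℝ (Fin n))
    (hεnorm : ∀ t, ‖ε t‖ = ρ)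
    (hiter : ∀ t, x (t + 1) = x t - η • gradient f (x t + ε t))
    (T : ℕ) (hT : 1 ≤ T) :
    (1 - 3 * L * η / 2) * ((1 / (T : ℝ)) * ∑ t ∈ Finset.range T, ‖gradient f (x t)‖ ^ 2) ≤
      (f (x 0) - fstar) / (η * T) + L * ρ ^ 2 / (2 * η) + L ^ 3 * η * ρ ^ 2 := by
  have hstep : ∀ t, η * (1 - 3 * L * η / 2) * ‖gradient f (x t)‖ ^ 2 ≤
      f (x t) - f (x (t + 1)) + (L * ρ ^ 2 / 2 + L ^ 3 * η ^ 2 * ρ ^ 2) := fun t => by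
    rw [hiter, ← hεnorm t, ← add_assoc]
    exact sam_step_le hdiff hlip hL.le hη.le (x t) (ε t)
  have hsum := Finset.sum_range_le_sub_add_mul hstep T
  rw [← Finset.mul_sum] at hsum
  have hT0 : (0 : ℝ) < T := by exact_mod_cast hT
  calc (1 - 3 * L * η / 2) * ((1 / (T : ℝ)) * ∑ t ∈ Finset.range T, ‖gradient f (x t)‖ ^ 2)
      = (η * (1 - 3 * L * η / 2) * ∑ t ∈ Finset.range T, ‖gradient f (x t)‖ ^ 2) / (η * T) := by
        field_simp
    _ ≤ (f (x 0) - fstar + T * (L * ρ ^ 2 / 2 + L ^ 3 * η ^ 2 * ρ ^ 2)) / (η * T) := by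
        gcongr
        linarith [hlb (x T)]
    _ = (f (x 0) - fstar) / (η * T) + L * ρ ^ 2 / (2 * η) + L ^ 3 * η * ρ ^ 2 := by
        field_simp
        ring

theorem stmt12 {n : ℕ} (f : EuclideanSpace ℝ (Fin n) → ℝ) (L η ρ fstar : ℝ)
    (hL : 0 < L) (hη : 0 < η) (hηle : η ≤ 2 / (3 * L)) (hρ : 0 < ρ)
    (hdiff : Differentiable ℝ f)
    (hlip : ∀ x y, ‖gradient f x - gradient f y‖ ≤ L * ‖x - y‖)
    (hlb : ∀ x, fstar ≤ f x)
    (x ε : ℕ → EuclideanSpace ℝ (Fin n))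
    (hεnorm : ∀ t, ‖ε t‖ = ρ)
    (hiter : ∀ t, x (t + 1) = x t - η • gradient f (x t + ε t))
    (T : ℕ) (hT : 1 ≤ T) :
    (1 - 3 * L * η / 2) * ((1 / (T : ℝ)) * ∑ t ∈ Finset.range T, ‖gradient f (x t)‖ ^ 2) ≤
      (f (x 0) - fstar) / (η * T) + L * ρ ^ 2 / (2 * η) + L ^ 3 * η * ρ ^ 2 :=
  stmt12_general f L η ρ fstar hL hη hdiff hlip hlb x ε hεnorm hiter T hT
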